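/- arXiv:1810.12422 — 10 statements merged into one kernel-verified Lean document; each statement's English description precedes it below -/
import Mathlib

section
/- For any k, n ∈ ℕ with k ≠ n, the function f_k : A^k → {0,1} preserves the relation pair (P_n, Q_n); that is, for any x_1, …, x_k ∈ P_n, the tuple obtained by applying f_k coordinatewise (to the rows of the n×k matrix with columns x_1,…,x_k) lies in Q_n. -/
/-- The minor of `f : A^k → B` along `σ : [k] → [ℓ]`. -/
def Minor {A B : Type*} {k l : ℕ} (f : (Fin k → A) → B) (σ : Fin k → Fin l) :
    (Fin l → A) → B := fun x => f (fun i => x (σ i))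

/-- `f` preserves the relational pair `(P, Q)`. -/
def Preserves {A B : Type*} {k m : ℕ} (f : (Fin k → A) → B)
    (P : Set (Fin m → A)) (Q : Set (Fin m → B)) : Prop :=
  ∀ p : Fin k → (Fin m → A), (∀ j, p j ∈ P) →
    (fun i => f (fun j => p j i)) ∈ Q

/-- `P_n`: tuples with exactly one coordinate equal to `1` and all others `0`. -/
def Prel (A : Type*) [Zero A] [One A] (n : ℕ) : Set (Fin n → A) :=
  {x | ∃ i, x i = 1 ∧ ∀ j, j ≠ i → x j = 0}

/-- `Q_n := {0,1}^n \ {(1,…,1)}`. -/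
def Qrel (B : Type*) [Zero B] [One B] (n : ℕ) : Set (Fin n → B) :=
  {y | (∀ i, y i = 0 ∨ y i = 1) ∧ y ≠ fun _ => 1}

/-- `f_k : A^k → {0,1} ⊆ B`, the indicator function of `P_k`. -/
def fok (A B : Type*) [Zero A] [One A] [DecidableEq A] [Zero B] [One B] (k : ℕ) :
    (Fin k → A) → B :=
  fun x => if (∃ i, x i = 1 ∧ ∀ j, j ≠ i → x j = 0) then 1 else 0

/-!
If every row of the `n × k` matrix with columns `x_1, …, x_k ∈ P_n` were mapped to `1` by `f_k`,
then every row and every column of that matrix would contain exactly one `1`. The positions of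
these ones form a bijection `[n] ≃ [k]`, forcing `k = n`.
-/

theorem Prel.eq_of_apply_eq_one {A : Type*} [Zero A] [One A] (h10 : (1 : A) ≠ 0) {n : ℕ}
    {x : Fin n → A} (hx : x ∈ Prel A n) {i j : Fin n} (hi : x i = 1) (hj : x j = 1) : i = j := by
  obtain ⟨l, -, hl⟩ := hx
  have h_eq_l : ∀ m, x m = 1 → m = l := fun m hm => by_contra fun hml => h10 (hm ▸ hl m hml)
  exact (h_eq_l i hi).trans (h_eq_l j hj).symm

theorem fok_eq_zero_or_eq_one {A B : Type*} [Zero A] [One A] [DecidableEq A] [Zero B] [One B]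
    {k : ℕ} (x : Fin k → A) : fok A B k x = 0 ∨ fok A B k x = 1 := by
  unfold fok
  split_ifs <;> simp

theorem mem_Prel_of_fok_eq_one {A B : Type*} [Zero A] [One A] [DecidableEq A] [Zero B] [One B]
    (h10 : (1 : B) ≠ 0) {k : ℕ} {x : Fin k → A} (hx : fok A B k x = 1) : x ∈ Prel A k := by
  unfold fok at hx
  split_ifs at hx with h
  · exact h
  · exact absurd hx.symm h10

theorem eq_of_columns_mem_Prel_of_rows_mem_Prel {A : Type*} [Zero A] [One A] (h10 : (1 : A) ≠ 0)
    {k n : ℕ} (p : Fin k → Fin n → A) (hcol : ∀ j, p j ∈ Prel A n)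
    (hrow : ∀ i, (fun j => p j i) ∈ Prel A k) : k = n := by
  choose τ hτ using fun j => hcol j
  choose σ hσ using fun i => hrow i
  have hτσ : ∀ i, τ (σ i) = i := fun i =>
    Prel.eq_of_apply_eq_one h10 (hcol (σ i)) (hτ (σ i)).1 (hσ i).1
  have hστ : ∀ j, σ (τ j) = j := fun j =>
    Prel.eq_of_apply_eq_one h10 (hrow (τ j)) (hσ (τ j)).1 (hτ j).1
  exact Fin.equiv_iff_eq.mp ⟨⟨τ, σ, hστ, hτσ⟩⟩

/-- For `k ≠ n`, the function `f_k` preserves the pair `(P_n, Q_n)`. -/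
theorem fk_preserves_of_ne (d e : ℕ) (hd : 1 ≤ d) (he : 1 ≤ e)
    (k n : ℕ) (hkn : k ≠ n) :
    Preserves (fok (Fin (d+1)) (Fin (e+1)) k)
      (Prel (Fin (d+1)) n) (Qrel (Fin (e+1)) n) := by
  have hA : (1 : Fin (d+1)) ≠ 0 := by rw [Ne, Fin.one_eq_zero_iff]; omega
  have hB : (1 : Fin (e+1)) ≠ 0 := by rw [Ne, Fin.one_eq_zero_iff]; omega
  intro p hcol
  refine ⟨fun i => fok_eq_zero_or_eq_one _, fun hall => hkn ?_⟩
  exact eq_of_columns_mem_Prel_of_rows_mem_Prel hA p hcol fun i =>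
    mem_Prel_of_fok_eq_one hB (congrFun hall i)
end

section
/- For every k ∈ ℕ, the function f_k does not preserve the relation pair (P_k, Q_k): applying f_k to the k columns of the identity-pattern matrix (whose rows are the standard unit tuples) yields the tuple (1,…,1), which is not in Q_k. -/
theorem single_one_mem_Prel {A : Type*} [Zero A] [One A] {n : ℕ} (i : Fin n) :
    (Pi.single i 1 : Fin n → A) ∈ Prel A n :=
  ⟨i, Pi.single_eq_same i 1, fun _ hj => Pi.single_eq_of_ne hj 1⟩

theorem fok_eq_one_of_mem_Prel {A B : Type*} [Zero A] [One A] [DecidableEq A] [Zero B] [One B]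
    {k : ℕ} {x : Fin k → A} (hx : x ∈ Prel A k) : fok A B k x = 1 :=
  if_pos hx

theorem const_one_notMem_Qrel (B : Type*) [Zero B] [One B] (n : ℕ) :
    (fun _ => (1 : B)) ∉ Qrel B n :=
  fun h => h.2 rfl

theorem fk_not_preserves_self_general (d e : ℕ) (k : ℕ) :
    ¬ Preserves (fok (Fin (d+1)) (Fin (e+1)) k)
      (Prel (Fin (d+1)) k) (Qrel (Fin (e+1)) k) := by
  intro h
  have hcolumns := h (fun j => Pi.single j 1) fun j => single_one_mem_Prel j
  refine const_one_notMem_Qrel (Fin (e+1)) k ?_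
  convert hcolumns using 2 with i
  -- the identity pattern is symmetric, so its `i`-th column is again the unit tuple `e_i`
  simp only [Pi.single_comm _ _ i]
  exact (fok_eq_one_of_mem_Prel (single_one_mem_Prel i)).symm

/-- `f_k` does not preserve the pair `(P_k, Q_k)`. -/
theorem fk_not_preserves_self (d e : ℕ) (hd : 1 ≤ d) (he : 1 ≤ e) (k : ℕ) :
    ¬ Preserves (fok (Fin (d+1)) (Fin (e+1)) k)
      (Prel (Fin (d+1)) k) (Qrel (Fin (e+1)) k) :=
  fk_not_preserves_self_general d e k
end

section
/- For every k ∈ ℕ, the function e_k : {0,1}^k → {0,1} cannot be written as a sum modulo 2 of finitely many minors of functions e_i with i < k, nor as such a sum plus the constant 1. That is, e_k ≠ c + Σ_{j=1}^{m} e_{i_j}^{σ_j} (mod 2) for any c ∈ {0,1}, m ∈ ℕ, indices i_j < k, and maps σ_j : [i_j] → [k]. -/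
/-! Sum both sides over `{0,1}^k` in `ZMod 2`. The right side gives `1`. On the left, the
constant `c` (as `k ≥ 1`) and every minor `e_i^σ` (as `σ` misses a coordinate when `i < k`)
ignore some coordinate, so flipping it pairs up their values and each sums to `0`. -/

/-- `e_k : {0,1}^k → {0,1}` (values in `ZMod 2`), equal to `1` iff all coordinates are `1`. -/
def ez (k : ℕ) : (Fin k → Bool) → ZMod 2 :=
  fun x => if (∀ i, x i = true) then 1 else 0

open Finset Function

lemma sum_eq_zero_of_flip_invariant {ι R : Type*} [Fintype ι] [DecidableEq ι] [Semiring R]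
    [CharP R 2] (f : (ι → Bool) → R) (p : ι) (hf : ∀ x, f (update x p (!x p)) = f x) :
    ∑ x, f x = 0 := by
  refine sum_involution (fun x _ => update x p (!x p)) (fun x _ => ?_) (fun x _ _ hx => ?_)
    (fun _ _ => mem_univ _) (fun x _ => ?_)
  · rw [hf, CharTwo.add_self_eq_zero]
  · simpa using congrFun hx p
  · simp

lemma sum_ez_eq_one (k : ℕ) : ∑ x, ez k x = 1 := by
  have hez : ∀ x, ez k x = if x = fun _ => true then 1 else 0 := fun x => by
    simp only [ez, funext_iff]
  simp [hez]

lemma sum_ez_comp_eq_zero {ι : Type*} [Fintype ι] [DecidableEq ι] {n : ℕ} (σ : Fin n → ι)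
    (hσ : ¬ Surjective σ) : ∑ x : ι → Bool, ez n (x ∘ σ) = 0 := by
  obtain ⟨p, hp⟩ : ∃ p, ∀ t, σ t ≠ p := by simpa [Surjective] using hσ
  refine sum_eq_zero_of_flip_invariant _ p fun x => ?_
  congr 1
  funext t
  exact update_of_ne (hp t) _ _

/-- `e_k` is not a sum mod 2 of a constant and finitely many minors of functions `e_i`
with `i < k`. -/
theorem ek_not_sum_of_minors (k : ℕ) (hk : 1 ≤ k) (c : ZMod 2) (m : ℕ)
    (i : Fin m → ℕ) (hi : ∀ j, i j < k)
    (σ : (j : Fin m) → Fin (i j) → Fin k) :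
    (fun x : Fin k → Bool => c + ∑ j, ez (i j) (fun t => x (σ j t))) ≠ ez k := by
  intro h
  have hsum := congrArg (fun f => ∑ x, f x) h
  simp only [sum_add_distrib, sum_ez_eq_one] at hsum
  rw [sum_comm] at hsum
  have hconst : ∑ _ : Fin k → Bool, c = 0 :=
    sum_eq_zero_of_flip_invariant _ ⟨0, hk⟩ fun _ => rfl
  have hminor (j : Fin m) : ∑ x : Fin k → Bool, ez (i j) (fun t => x (σ j t)) = 0 :=
    sum_ez_comp_eq_zero (σ j) fun hs =>
      (hi j).not_ge (by simpa using Fintype.card_le_of_surjective _ hs)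
  simp [hconst, hminor] at hsum
end

section
/- Let A be a finite set. Then the clonoids ⟨e_1⟩, ⟨e_2⟩, ⟨e_3⟩, … generated by the functions e_k with target algebra B = ({0,1}, +, 0, 1) form a strictly increasing infinite chain: ⟨e_1⟩_B ⊊ ⟨e_2⟩_B ⊊ ⟨e_3⟩_B ⊊ …. -/
/-- A clonoid with source `A` and target algebra `({0,1}, +, 0, 1)`:
closed under minors, pointwise addition mod 2, and containing all constants. -/
def IsClonoidAdd (A : Type*) (C : (n : ℕ) → Set ((Fin n → A) → ZMod 2)) : Prop :=
  (∀ k l (σ : Fin k → Fin l) f, f ∈ C k → Minor f σ ∈ C l) ∧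
  (∀ k f g, f ∈ C k → g ∈ C k → (fun x => f x + g x) ∈ C k) ∧
  (∀ k, (fun _ => (0 : ZMod 2)) ∈ C k) ∧
  (∀ k, (fun _ => (1 : ZMod 2)) ∈ C k)

/-- The clonoid with target `({0,1}, +, 0, 1)` generated by the family `F`. -/
def GenAdd (A : Type*) (F : (n : ℕ) → Set ((Fin n → A) → ZMod 2)) (k : ℕ) :
    Set ((Fin k → A) → ZMod 2) :=
  {f | ∀ C : (n : ℕ) → Set ((Fin n → A) → ZMod 2),
      IsClonoidAdd A C → (∀ n, F n ⊆ C n) → f ∈ C k}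

/-- `e_n : A^n → {0,1}`, equal to `1` iff all coordinates equal `1`. -/
def eA (A : Type*) [One A] [DecidableEq A] (n : ℕ) : (Fin n → A) → ZMod 2 :=
  fun x => if (∀ i, x i = 1) then 1 else 0

/-- The family consisting of the single function `e_k` (at arity `k`). -/
def eFam (A : Type*) [One A] [DecidableEq A] (k : ℕ) :
    (n : ℕ) → Set ((Fin n → A) → ZMod 2) :=
  fun n => if n = k then {eA A n} else ∅

section

variable {A : Type*} [One A] [DecidableEq A]

def allOneOn (A : Type*) [One A] [DecidableEq A] {n : ℕ} (S : Finset (Fin n)) :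
    (Fin n → A) → ZMod 2 :=
  fun x => if ∀ i ∈ S, x i = 1 then 1 else 0

theorem eA_eq_allOneOn_univ (n : ℕ) : eA A n = allOneOn A (Finset.univ : Finset (Fin n)) := by
  funext x
  simp [eA, allOneOn]

theorem allOneOn_comp {m l : ℕ} (σ : Fin m → Fin l) (S : Finset (Fin m)) (x : Fin l → A) :
    allOneOn A S (fun i => x (σ i)) = allOneOn A (S.image σ) x := by
  simp [allOneOn]

theorem sum_allOneOn_boolEmbed [Zero A] (h01 : (0 : A) ≠ 1) {n : ℕ} (S : Finset (Fin n)) :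
    ∑ y : Fin n → Bool, allOneOn A S (fun i => if y i then 1 else 0) =
      if S = Finset.univ then 1 else 0 := by
  have hfactor : ∀ y : Fin n → Bool, allOneOn A S (fun i => if y i then 1 else 0) =
      ∏ i, if i ∈ S → y i = true then (1 : ZMod 2) else 0 := by
    intro y
    rw [Fintype.prod_boole, allOneOn]
    congr 1
    simp [h01]
  have hfiber : ∀ i, ∑ b : Bool, (if i ∈ S → b = true then (1 : ZMod 2) else 0) =
      if i ∈ S then 1 else 0 := by
    intro i
    by_cases hi : i ∈ S
    · simp [hi]
    · simp only [hi, Fintype.sum_bool]; decide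
  simp_rw [hfactor,
    ← Fintype.prod_sum (fun i (b : Bool) => if i ∈ S → b = true then (1 : ZMod 2) else 0),
    hfiber, Fintype.prod_boole, Finset.eq_univ_iff_forall]
  congr

def degreeLE (A : Type*) [One A] [DecidableEq A] (k n : ℕ) :
    Submodule (ZMod 2) ((Fin n → A) → ZMod 2) :=
  Submodule.span (ZMod 2) ((fun S => allOneOn A S) '' {S | S.card ≤ k})

theorem allOneOn_mem_degreeLE {k n : ℕ} {S : Finset (Fin n)} (hS : S.card ≤ k) :
    allOneOn A S ∈ degreeLE A k n :=
  Submodule.subset_span ⟨S, hS, rfl⟩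

theorem minor_mem_degreeLE {k m l : ℕ} (σ : Fin m → Fin l) {f : (Fin m → A) → ZMod 2}
    (hf : f ∈ degreeLE A k m) : Minor f σ ∈ degreeLE A k l := by
  let minorMap := LinearMap.funLeft (ZMod 2) (ZMod 2) (fun (x : Fin l → A) i => x (σ i))
  suffices degreeLE A k m ≤ (degreeLE A k l).comap minorMap from this hf
  rw [degreeLE, Submodule.span_le]
  rintro _ ⟨S, hS, rfl⟩
  have hminor : minorMap (allOneOn A S) = allOneOn A (S.image σ) :=
    funext (allOneOn_comp σ S)
  rw [SetLike.mem_coe, Submodule.mem_comap, hminor]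
  exact allOneOn_mem_degreeLE (Finset.card_image_le.trans hS)

theorem isClonoidAdd_degreeLE (k : ℕ) : IsClonoidAdd A (fun n => degreeLE A k n) := by
  have hone : ∀ n, (fun _ => (1 : ZMod 2)) ∈ degreeLE A k n := fun n => by
    have hempty : allOneOn A (∅ : Finset (Fin n)) = fun _ => 1 := by
      funext x
      simp [allOneOn]
    exact hempty ▸ allOneOn_mem_degreeLE (Nat.zero_le k)
  exact ⟨fun _ _ σ _ hf => minor_mem_degreeLE σ hf, fun _ _ _ => Submodule.add_mem _,
    fun _ => Submodule.zero_mem _, hone⟩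

theorem eA_mem_degreeLE (k : ℕ) : eA A k ∈ degreeLE A k k := by
  rw [eA_eq_allOneOn_univ]
  exact allOneOn_mem_degreeLE (by simp)

def boolCubeSum (A : Type*) [Zero A] [One A] (n : ℕ) :
    ((Fin n → A) → ZMod 2) →ₗ[ZMod 2] ZMod 2 :=
  ∑ y : Fin n → Bool, LinearMap.proj (fun i => if y i then 1 else 0)

theorem eA_not_mem_degreeLE [Zero A] (h01 : (0 : A) ≠ 1) {k n : ℕ} (hkn : k < n) :
    eA A n ∉ degreeLE A k n := by
  have hker : degreeLE A k n ≤ LinearMap.ker (boolCubeSum A n) := by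
    rw [degreeLE, Submodule.span_le]
    rintro _ ⟨S, hS, rfl⟩
    have hS' : S ≠ Finset.univ := by
      rintro rfl
      simp only [Set.mem_ofPred_eq, Finset.card_univ, Fintype.card_fin] at hS
      omega
    simp [boolCubeSum, sum_allOneOn_boolEmbed h01, hS']
  intro he
  have := hker he
  simp [boolCubeSum, eA_eq_allOneOn_univ, sum_allOneOn_boolEmbed h01] at this

theorem eA_mem_of_eA_succ_mem {C : (n : ℕ) → Set ((Fin n → A) → ZMod 2)}
    (hC : IsClonoidAdd A C) {k : ℕ} (h : eA A (k + 1) ∈ C (k + 1)) : eA A k ∈ C k := by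
  cases k with
  | zero =>
    convert hC.2.2.2 0 using 1
    funext x
    simp [eA]
  | succ m =>
    convert hC.1 _ _ (Fin.lastCases (Fin.last m) id) _ h using 1
    funext x
    simp [eA, Minor, Fin.forall_fin_succ']

theorem eFam_subset {S : (n : ℕ) → Set ((Fin n → A) → ZMod 2)} {k : ℕ} (h : eA A k ∈ S k) :
    ∀ n, eFam A k n ⊆ S n := by
  intro n f hf
  by_cases hn : n = k
  · subst hn
    simp only [eFam, if_true, Set.mem_singleton_iff] at hf
    exact hf ▸ h
  · simp [eFam, hn] at hf

theorem eA_mem_eFam (k : ℕ) : eA A k ∈ eFam A k k := by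
  simp [eFam]

theorem eA_mem_GenAdd_eFam (k : ℕ) : eA A k ∈ GenAdd A (eFam A k) k :=
  fun _ _ hF => hF k (eA_mem_eFam k)

end

theorem gen_ek_strict_chain_general (A : Type*) [Zero A] [One A] [DecidableEq A]
    (h01 : (0 : A) ≠ 1) (k : ℕ) :
    (∀ n, GenAdd A (eFam A k) n ⊆ GenAdd A (eFam A (k+1)) n) ∧
    ¬ (∀ n, GenAdd A (eFam A (k+1)) n ⊆ GenAdd A (eFam A k) n) := by
  refine ⟨fun n f hf C hC hFC => hf C hC (eFam_subset ?_), fun h => ?_⟩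
  · exact eA_mem_of_eA_succ_mem hC (hFC _ (eA_mem_eFam _))
  · exact eA_not_mem_degreeLE h01 k.lt_succ_self
      (h _ (eA_mem_GenAdd_eFam _) _ (isClonoidAdd_degreeLE k) (eFam_subset (eA_mem_degreeLE k)))

/-- Over a finite source `A` containing distinct elements `0` and `1`, the clonoids
`⟨e_1⟩_B ⊊ ⟨e_2⟩_B ⊊ ⋯` with target `B = ({0,1}, +, 0, 1)` form a strictly
increasing infinite chain. -/
theorem gen_ek_strict_chain (A : Type*) [Fintype A] [Zero A] [One A] [DecidableEq A]
    (h01 : (0 : A) ≠ 1) (k : ℕ) (hk : 1 ≤ k) :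
    (∀ n, GenAdd A (eFam A k) n ⊆ GenAdd A (eFam A (k+1)) n) ∧
    ¬ (∀ n, GenAdd A (eFam A (k+1)) n ⊆ GenAdd A (eFam A k) n) :=
  gen_ek_strict_chain_general A h01 k
end

section
/- Let A be a finite set with |A| > 1 and B a finite algebra with an NU-term. Then the set of clonoids with source A and target algebra B is finite. -/
/-- `Cl` is a clone of operations on `B`: it contains all projections and is
closed under superposition. -/
def IsCloneOn (B : Type*) (Cl : (n : ℕ) → Set ((Fin n → B) → B)) : Prop :=
  (∀ n (i : Fin n), (fun x : Fin n → B => x i) ∈ Cl n) ∧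
  (∀ m k (φ : (Fin m → B) → B) (g : Fin m → (Fin k → B) → B),
    φ ∈ Cl m → (∀ j, g j ∈ Cl k) →
      (fun x : Fin k → B => φ (fun j => g j x)) ∈ Cl k)

/-- A clonoid with source `A` and target the algebra on `B` whose term operations
form `Cl`: closed under minors, and each arity-part is closed under the operations
in `Cl` applied pointwise (i.e., is a subuniverse of `B^{A^k}`). -/
def IsClonoid (A B : Type*) (Cl : (n : ℕ) → Set ((Fin n → B) → B))
    (C : (n : ℕ) → Set ((Fin n → A) → B)) : Prop :=
  (∀ k l (σ : Fin k → Fin l) f, f ∈ C k → Minor f σ ∈ C l) ∧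
  (∀ k m (φ : (Fin m → B) → B) (g : Fin m → (Fin k → A) → B),
    φ ∈ Cl m → (∀ j, g j ∈ C k) →
      (fun x : Fin k → A => φ (fun j => g j x)) ∈ C k)

/-- `φ` is an `n`-ary near-unanimity operation. -/
def IsNU {B : Type*} (n : ℕ) (φ : (Fin n → B) → B) : Prop :=
  ∀ x y : B, ∀ i : Fin n, φ (Function.update (fun _ => x) i y) = x

/-
Baker–Pixley: if `φ` is an `(m+1)`-ary NU operation, a subuniverse of `B^X` contains every
function that agrees with some member on each set of at most `m` points, since the NU law lets
`φ` glue `m + 1` partial interpolants each missing one point. For a clonoid over finite `A`,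
`m` points of `A^k` are read off by a minor through the arity `N = |A|^m` (one variable per
possible column) followed by a minor back to arity `k`. Hence the positive arities of a
clonoid are determined by its `N`-ary part, and a clonoid by its nullary and `N`-ary parts,
of which there are finitely many.
-/

namespace IsNU

variable {B : Type*} {m : ℕ} {φ : (Fin (m + 1) → B) → B}

theorem apply_eq_of_forall_ne (hφ : IsNU (m + 1) φ) {v : Fin (m + 1) → B} {x : B}
    (i : Fin (m + 1)) (hv : ∀ j, j ≠ i → v j = x) : φ v = x := by
  have : v = Function.update (fun _ => x) i (v i) := by
    funext j
    by_cases hj : j = i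
    · subst hj; simp
    · simp [Function.update_of_ne hj, hv j hj]
  rw [this]
  exact hφ x (v i) i

theorem eqOn_of_eqOn_diff_singleton {X : Type*} (hφ : IsNU (m + 1) φ)
    {t : Fin (m + 1) → X} (ht : Function.Injective t) {g : Fin (m + 1) → X → B} {f : X → B}
    {S : Set X} (hg : ∀ j, Set.EqOn (g j) f (S \ {t j})) :
    Set.EqOn (fun x => φ (fun j => g j x)) f S := by
  intro s hs
  by_cases hst : ∃ i, t i = s
  · obtain ⟨i, rfl⟩ := hst
    exact hφ.apply_eq_of_forall_ne i fun j hj =>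
      hg j ⟨hs, fun h => hj (ht (Set.mem_singleton_iff.1 h).symm)⟩
  · push Not at hst
    exact hφ.apply_eq_of_forall_ne 0 fun j _ => hg j ⟨hs, (hst j).symm⟩

theorem mem_of_forall_card_le {X : Type*} [Fintype X] (hφ : IsNU (m + 1) φ) {F : Set (X → B)}
    (hF : ∀ g : Fin (m + 1) → X → B, (∀ j, g j ∈ F) → (fun x => φ fun j => g j x) ∈ F)
    {f : X → B} (hf : ∀ S : Finset X, S.card ≤ m → ∃ g ∈ F, Set.EqOn g f S) :
    f ∈ F := by
  classical
  suffices h : ∀ S : Finset X, ∃ g ∈ F, Set.EqOn g f S by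
    obtain ⟨g, hg, hgf⟩ := h Finset.univ
    simpa [funext fun x => hgf (Finset.mem_coe.2 (Finset.mem_univ x))] using hg
  intro S
  induction S using Finset.strongInduction with
  | H S ih =>
    by_cases hS : S.card ≤ m
    · exact hf S hS
    obtain ⟨ι⟩ : Nonempty (Fin (m + 1) ↪ S) := Function.Embedding.nonempty_of_card_le <| by
      simp only [Fintype.card_fin, Fintype.card_coe]; omega
    have hι : Function.Injective fun j => (ι j : X) := Subtype.val_injective.comp ι.injective
    choose g hgF hgf using fun j => ih _ (Finset.erase_ssubset (ι j).2)
    refine ⟨_, hF g hgF, hφ.eqOn_of_eqOn_diff_singleton hι fun j => ?_⟩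
    simpa using hgf j

end IsNU

theorem exists_minor_minor_eqOn {A B : Type*} [Fintype A] [Nonempty A] {m k : ℕ} (hk : 0 < k)
    {S : Finset (Fin k → A)} (hS : S.card ≤ m) :
    ∃ (σ : Fin k → Fin (Fintype.card (Fin m → A)))
      (τ : Fin (Fintype.card (Fin m → A)) → Fin k),
      ∀ f : (Fin k → A) → B, Set.EqOn (Minor (Minor f σ) τ) f S := by
  have : Nonempty (Fin k) := Fin.pos_iff_nonempty.mp hk
  obtain ⟨ι⟩ : Nonempty (S ↪ Fin m) :=
    Function.Embedding.nonempty_of_card_le (by simpa using hS)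
  -- The rows of `x` are the points of `S`; `σ` identifies coordinates with equal columns, so
  -- `invFun σ ∘ σ` fixes every row.
  let x : Fin m → Fin k → A := Function.extend ι Subtype.val fun _ => Classical.arbitrary _
  let σ : Fin k → Fin (Fintype.card (Fin m → A)) := fun i => Fintype.equivFin _ fun j => x j i
  refine ⟨σ, Function.invFun σ, fun f s hs => congrArg f (funext fun i => ?_)⟩
  have hcol : σ (Function.invFun σ (σ i)) = σ i := Function.invFun_eq ⟨i, rfl⟩
  have hx : x (ι ⟨s, hs⟩) = s := ι.injective.extend_apply _ _ _
  rw [← hx]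
  exact congrFun ((Fintype.equivFin _).injective hcol) (ι ⟨s, hs⟩)

namespace IsClonoid

variable {A B : Type*} {Cl : (n : ℕ) → Set ((Fin n → B) → B)}
  {C D : (n : ℕ) → Set ((Fin n → A) → B)}

theorem subset_of_subset_card_pow [Fintype A] [Nonempty A] (hC : IsClonoid A B Cl C)
    (hD : IsClonoid A B Cl D) {m : ℕ} {φ : (Fin (m + 1) → B) → B} (hφ : φ ∈ Cl (m + 1))
    (hnu : IsNU (m + 1) φ)
    (hCD : C (Fintype.card (Fin m → A)) ⊆ D (Fintype.card (Fin m → A))) {k : ℕ}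
    (hk : 0 < k) : C k ⊆ D k := by
  intro f hf
  refine hnu.mem_of_forall_card_le (hD.2 k (m + 1) φ · hφ) fun S hS => ?_
  obtain ⟨σ, τ, hστ⟩ := exists_minor_minor_eqOn hk hS
  exact ⟨_, hD.1 _ k τ _ (hCD (hC.1 k _ σ f hf)), hστ f⟩

theorem eq_of_eq_zero_of_eq_card_pow [Fintype A] [Nonempty A] (hC : IsClonoid A B Cl C)
    (hD : IsClonoid A B Cl D) {m : ℕ} {φ : (Fin (m + 1) → B) → B} (hφ : φ ∈ Cl (m + 1))
    (hnu : IsNU (m + 1) φ) (h₀ : C 0 = D 0)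
    (hN : C (Fintype.card (Fin m → A)) = D (Fintype.card (Fin m → A))) : C = D := by
  funext k
  rcases Nat.eq_zero_or_pos k with rfl | hk
  · exact h₀
  · exact (hC.subset_of_subset_card_pow hD hφ hnu hN.subset hk).antisymm
      (hD.subset_of_subset_card_pow hC hφ hnu hN.symm.subset hk)

end IsClonoid

theorem finitely_many_clonoids_of_NU_general (A B : Type*) [Fintype A] [Fintype B]
    (hA : 1 < Fintype.card A)
    (Cl : (n : ℕ) → Set ((Fin n → B) → B))
    (hNU : ∃ n, 3 ≤ n ∧ ∃ nu ∈ Cl n, IsNU n nu) :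
    {C : (m : ℕ) → Set ((Fin m → A) → B) | IsClonoid A B Cl C}.Finite := by
  obtain ⟨_ | m, hn, φ, hφ, hnu⟩ := hNU
  · omega
  have : Nonempty A := Fintype.card_pos_iff.mp (by omega)
  let N := Fintype.card (Fin m → A)
  refine Set.Finite.of_finite_image (f := fun C => (C 0, C N)) (Set.toFinite _) ?_
  intro C hC D hD hCD
  exact hC.eq_of_eq_zero_of_eq_card_pow hD hφ hnu (congrArg Prod.fst hCD) (congrArg Prod.snd hCD)

/-- If `A` is finite with `|A| > 1` and `B` is a finite algebra with an NU term,
then there are only finitely many clonoids with source `A` and target `B`. -/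
theorem finitely_many_clonoids_of_NU (A B : Type*) [Fintype A] [Fintype B]
    (hA : 1 < Fintype.card A)
    (Cl : (n : ℕ) → Set ((Fin n → B) → B)) (hCl : IsCloneOn B Cl)
    (hNU : ∃ n, 3 ≤ n ∧ ∃ nu ∈ Cl n, IsNU n nu) :
    {C : (m : ℕ) → Set ((Fin m → A) → B) | IsClonoid A B Cl C}.Finite :=
  finitely_many_clonoids_of_NU_general A B hA Cl hNU
end

section
/- Let A and B be finite sets, let V be a nonempty proper subset of B with 0 ∈ V and 1 ∉ V, and set T_n := B^n \ (B\V)^n. Suppose φ : B^m → B preserves T_n (i.e., if b_1,…,b_m ∈ T_n then the tuple obtained by applying φ coordinatewise lies in T_n). If f_n = φ(f_{k_1}^{σ_1}, …, f_{k_m}^{σ_m}) pointwise, for some k_1,…,k_m with k_i ≠ n for all i and maps σ_i : [k_i] → [n], then a contradiction arises; hence no such representation exists. -/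
/-- `T_n := B^n \ (B\V)^n`: the tuples having at least one coordinate in `V`. -/
def Trel {B : Type*} (V : Set B) (n : ℕ) : Set (Fin n → B) :=
  {b | ∃ i, b i ∈ V}

/-!
Feed `φ` the `m` tuples `l ↦ f_{k_i}(e_l ∘ σ_i)`, where `e_l` is the `l`-th unit vector.
Since `k_i ≠ n`, the map `σ_i` is not a bijection, so some `j` does not have exactly one
preimage under `σ_i`; then `e_j ∘ σ_i ∉ P_{k_i}` and the `i`-th tuple has the entry `0 ∈ V`,
i.e. it lies in `T_n`. Hence so does its image under `φ`, which is `l ↦ f_n(e_l) = 1`,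
contradicting `1 ∉ V`.
-/

section UnitVectors

variable {A B : Type*} [Zero A] [One A]

lemma single_mem_Prel {n : ℕ} (j : Fin n) : Pi.single j (1 : A) ∈ Prel A n :=
  ⟨j, Pi.single_eq_same (M := fun _ => A) j 1,
    fun _ h => Pi.single_eq_of_ne (M := fun _ => A) h 1⟩

lemma existsUnique_of_single_comp_mem_Prel (hone : (1 : A) ≠ 0) {k n : ℕ} {σ : Fin k → Fin n}
    {j : Fin n} (h : Pi.single j (1 : A) ∘ σ ∈ Prel A k) : ∃! t, σ t = j := by
  obtain ⟨t, ht1, ht0⟩ := h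
  have hσ : ∀ s, (Pi.single j 1 : Fin n → A) (σ s) = 1 → σ s = j := fun s hs => by
    by_contra hne
    exact hone (hs ▸ Pi.single_eq_of_ne (M := fun _ => A) hne 1)
  refine ⟨t, hσ t ht1, fun s hs => by_contra fun hst => hone ?_⟩
  calc (1 : A) = (Pi.single j 1 : Fin n → A) (σ s) := by rw [hs, Pi.single_eq_same]
    _ = 0 := ht0 s hst

variable [DecidableEq A] [Zero B] [One B]

lemma fok_of_mem_Prel {k : ℕ} {x : Fin k → A} (hx : x ∈ Prel A k) : fok A B k x = 1 :=
  if_pos hx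

lemma fok_of_not_mem_Prel {k : ℕ} {x : Fin k → A} (hx : x ∉ Prel A k) : fok A B k x = 0 :=
  if_neg hx

lemma exists_fok_single_comp_eq_zero (hone : (1 : A) ≠ 0) {k n : ℕ} (hkn : k ≠ n)
    (σ : Fin k → Fin n) : ∃ j : Fin n, fok A B k (Pi.single j (1 : A) ∘ σ) = 0 := by
  by_contra! hne
  have hbij : Function.Bijective σ := (Function.bijective_iff_existsUnique σ).mpr fun j =>
    existsUnique_of_single_comp_mem_Prel hone <| by
      by_contra hj
      exact hne j (fok_of_not_mem_Prel hj)
  exact hkn (by simpa using Fintype.card_of_bijective hbij)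

end UnitVectors

theorem no_representation_of_fn_general (d e : ℕ) (hd : 1 ≤ d)
    (V : Set (Fin (e+1))) (hV0 : (0 : Fin (e+1)) ∈ V) (hV1 : (1 : Fin (e+1)) ∉ V)
    (n m : ℕ) (φ : (Fin m → Fin (e+1)) → Fin (e+1))
    (hφ : ∀ b : Fin m → (Fin n → Fin (e+1)), (∀ j, b j ∈ Trel V n) →
      (fun i => φ (fun j => b j i)) ∈ Trel V n)
    (k : Fin m → ℕ) (hk : ∀ i, k i ≠ n)
    (σ : (i : Fin m) → Fin (k i) → Fin n)
    (heq : fok (Fin (d+1)) (Fin (e+1)) n =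
      fun x => φ (fun i => fok (Fin (d+1)) (Fin (e+1)) (k i) (fun t => x (σ i t)))) :
    False := by
  have hone : (1 : Fin (d+1)) ≠ 0 := by
    obtain ⟨d, rfl⟩ := Nat.exists_eq_add_of_le' hd
    exact Fin.zero_ne_one.symm
  let b : Fin m → Fin n → Fin (e+1) := fun i l =>
    fok (Fin (d+1)) (Fin (e+1)) (k i) ((Pi.single l 1 : Fin n → Fin (d+1)) ∘ σ i)
  have hb : ∀ i, b i ∈ Trel V n := fun i => by
    obtain ⟨j, hj⟩ := exists_fok_single_comp_eq_zero (B := Fin (e+1)) hone (hk i) (σ i)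
    have hzero : b i j = 0 := hj
    exact ⟨j, hzero ▸ hV0⟩
  obtain ⟨l, hl⟩ := hφ b hb
  have hφl : φ (fun i => b i l) = 1 :=
    (congrFun heq (Pi.single l 1)).symm.trans (fok_of_mem_Prel (single_mem_Prel l))
  exact hV1 (hφl ▸ hl)

/-- If `V` is a cube term blocker set (with `0 ∈ V`, `1 ∉ V`), `φ` preserves
`T_n`, and `k_i ≠ n` for all `i`, then `f_n` cannot equal
`φ(f_{k_1}^{σ_1}, …, f_{k_m}^{σ_m})`. -/
theorem no_representation_of_fn (d e : ℕ) (hd : 1 ≤ d) (he : 1 ≤ e)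
    (V : Set (Fin (e+1))) (hV0 : (0 : Fin (e+1)) ∈ V) (hV1 : (1 : Fin (e+1)) ∉ V)
    (n m : ℕ) (φ : (Fin m → Fin (e+1)) → Fin (e+1))
    (hφ : ∀ b : Fin m → (Fin n → Fin (e+1)), (∀ j, b j ∈ Trel V n) →
      (fun i => φ (fun j => b j i)) ∈ Trel V n)
    (k : Fin m → ℕ) (hk : ∀ i, k i ≠ n)
    (σ : (i : Fin m) → Fin (k i) → Fin n)
    (heq : fok (Fin (d+1)) (Fin (e+1)) n =
      fun x => φ (fun i => fok (Fin (d+1)) (Fin (e+1)) (k i) (fun t => x (σ i t)))) :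
    False :=
  no_representation_of_fn_general d e hd V hV0 hV1 n m φ hφ k hk σ heq
end

section
/- Let A be a finite set and B a finite idempotent algebra with |A|, |B| > 1 and no cube term. Then there are continuum many (2^{ℵ₀}) clonoids with source A and target algebra B. -/
/-- The clone `Cl` on `B` has a cube term: for some `k ≥ 1` there is a
`(2^k - 1)`-ary operation `c ∈ Cl` and an enumeration `col` of the columns
`{x,y}^k \ {(x,…,x)}` (encoded by Boolean tuples, `true` meaning `y`) such that
applying `c` to each row of the resulting matrix yields `(x,…,x)`. -/
def HasCubeTerm (B : Type*) (Cl : (n : ℕ) → Set ((Fin n → B) → B)) : Prop :=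
  ∃ k, 1 ≤ k ∧ ∃ c ∈ Cl (2 ^ k - 1), ∃ col : Fin (2 ^ k - 1) → (Fin k → Bool),
    (∀ s : Fin k → Bool, s ≠ (fun _ => false) → ∃ j, col j = s) ∧
    (∀ j, col j ≠ (fun _ => false)) ∧
    (∀ x y : B, ∀ i : Fin k, c (fun j => if col j i then y else x) = x)

namespace Clonoid

section Covering

variable {B : Type*} {Cl : (n : ℕ) → Set ((Fin n → B) → B)}

def IsIdempotent (Cl : (n : ℕ) → Set ((Fin n → B) → B)) : Prop :=
  ∀ n (φ : (Fin n → B) → B), φ ∈ Cl n → ∀ b, φ (fun _ => b) = b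

def veval {m : ℕ} (φ : (Fin m → B) → B) (S : Fin m → Bool) (x y : B) : B :=
  φ (fun i => if S i then y else x)

/-- The pairs `(d, c)` with `d ≠ c` for which no term covers `{(d, c)}` play the role of
a cube term blocker. -/
def Covers {m : ℕ} (φ : (Fin m → B) → B) (Q : Set (B × B)) : Prop :=
  ∀ j, ∃ S : Fin m → Bool, S j = true ∧ ∀ p ∈ Q, veval φ S p.1 p.2 = p.1

def Coverable (Cl : (n : ℕ) → Set ((Fin n → B) → B)) (Q : Set (B × B)) : Prop :=
  ∃ m, ∃ φ ∈ Cl m, Covers φ Q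

def CoversUpTo {m : ℕ} (φ : (Fin m → B) → B) (Q : Set (B × B)) (q : B × B)
    (D : Set B) : Prop :=
  ∀ j, ∃ S : Fin m → Bool, S j = true ∧ (∀ p ∈ Q, veval φ S p.1 p.2 = p.1) ∧
    veval φ S q.1 q.2 ∈ insert q.1 D

theorem veval_self (hidem : IsIdempotent Cl) {m : ℕ} {φ : (Fin m → B) → B}
    (hφ : φ ∈ Cl m) (S : Fin m → Bool) (x : B) : veval φ S x x = x := by
  simpa only [veval, ite_self] using hidem m φ hφ x

theorem minor_mem (hCl : IsCloneOn B Cl) {k l : ℕ} {f : (Fin k → B) → B}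
    (hf : f ∈ Cl k) (σ : Fin k → Fin l) :
    (fun x : Fin l → B => f (fun i => x (σ i))) ∈ Cl l :=
  hCl.2 k l f (fun j x => x (σ j)) hf (fun j => hCl.1 l (σ j))

theorem covers_empty {m : ℕ} (φ : (Fin m → B) → B) : Covers φ ∅ :=
  fun _ => ⟨fun _ => true, rfl, fun _ hp => hp.elim⟩

theorem coverable_diag (hCl : IsCloneOn B Cl) (b : B) : Coverable Cl {(b, b)} :=
  ⟨1, fun v => v 0, hCl.1 1 0, fun _ => ⟨fun _ => true, rfl, by simp [veval]⟩⟩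

def compOp {m M : ℕ} (θ : (Fin m → B) → B) (Θ : (Fin M → B) → B) :
    (Fin (m * M) → B) → B :=
  fun z => θ (fun t => Θ (fun i => z (finProdFinEquiv (t, i))))

theorem compOp_mem (hCl : IsCloneOn B Cl) {m M : ℕ} {θ : (Fin m → B) → B}
    {Θ : (Fin M → B) → B} (hθ : θ ∈ Cl m) (hΘ : Θ ∈ Cl M) :
    compOp θ Θ ∈ Cl (m * M) :=
  hCl.2 m (m * M) θ _ hθ (fun t => minor_mem hCl hΘ (fun i => finProdFinEquiv (t, i)))

theorem veval_compOp_snd (hidem : IsIdempotent Cl) {m M : ℕ} {θ : (Fin m → B) → B}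
    (Θ : (Fin M → B) → B) (hθ : θ ∈ Cl m) (S : Fin M → Bool) (x y : B) :
    veval (compOp θ Θ) (fun z => S (finProdFinEquiv.symm z).2) x y = veval Θ S x y := by
  simp only [veval, compOp, Equiv.symm_apply_apply]
  exact hidem m θ hθ _

theorem veval_compOp_and (hidem : IsIdempotent Cl) {m M : ℕ} (θ : (Fin m → B) → B)
    {Θ : (Fin M → B) → B} (hΘ : Θ ∈ Cl M) (T : Fin m → Bool) (S : Fin M → Bool)
    (x y : B) :
    veval (compOp θ Θ)
        (fun z => T (finProdFinEquiv.symm z).1 && S (finProdFinEquiv.symm z).2) x y =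
      veval θ T x (veval Θ S x y) := by
  simp only [veval, compOp, Equiv.symm_apply_apply]
  congr 1
  funext t
  cases T t
  · simpa using hidem M Θ hΘ x
  · simp

/-- One elimination step: composing with a term covering `(q.1, β)` removes `β` from the
values allowed at `q`. Variables of `Θ` where `q` evaluates to `β` are moved into the
covering sets of `θ`; all other variables are left as they are. -/
theorem CoversUpTo.compOp (hidem : IsIdempotent Cl) {m M : ℕ} {θ : (Fin m → B) → B}
    {Θ : (Fin M → B) → B} (hθ : θ ∈ Cl m) (hΘ : Θ ∈ Cl M) {Q : Set (B × B)}
    {q : B × B} {β : B} {D : Set B} (hθq : Covers θ {(q.1, β)})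
    (h : CoversUpTo Θ Q q (insert β D)) : CoversUpTo (compOp θ Θ) Q q D := by
  intro j
  obtain ⟨⟨t, i⟩, rfl⟩ := finProdFinEquiv.surjective j
  obtain ⟨S, hSi, hSQ, hSq⟩ := h i
  by_cases hv : veval Θ S q.1 q.2 ∈ insert q.1 D
  · refine ⟨fun z => S (finProdFinEquiv.symm z).2, by simpa using hSi, ?_, ?_⟩
    · intro p hp
      rw [veval_compOp_snd hidem Θ hθ]
      exact hSQ p hp
    · rwa [veval_compOp_snd hidem Θ hθ]
  · have hβ : veval Θ S q.1 q.2 = β := by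
      rw [Set.insert_comm] at hSq
      exact hSq.resolve_right hv
    obtain ⟨T, hTt, hT⟩ := hθq t
    refine ⟨fun z => T (finProdFinEquiv.symm z).1 && S (finProdFinEquiv.symm z).2,
      by simp [hTt, hSi], ?_, ?_⟩
    · intro p hp
      rw [veval_compOp_and hidem θ hΘ, hSQ p hp, veval_self hidem hθ]
    · rw [veval_compOp_and hidem θ hΘ, hβ, hT _ rfl]
      exact Set.mem_insert _ _

theorem coverable_insert [Fintype B] (hCl : IsCloneOn B Cl) (hidem : IsIdempotent Cl)
    (hpairs : ∀ p : B × B, Coverable Cl {p}) {Q : Set (B × B)} (hQ : Coverable Cl Q)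
    (q : B × B) : Coverable Cl (insert q Q) := by
  classical
  suffices key : ∀ (D : Finset B) (M : ℕ), ∀ Θ ∈ Cl M, CoversUpTo Θ Q q ↑D →
      Coverable Cl (insert q Q) by
    obtain ⟨M, Θ, hΘ, hcov⟩ := hQ
    refine key Finset.univ M Θ hΘ fun j => ?_
    obtain ⟨S, hSj, hSQ⟩ := hcov j
    exact ⟨S, hSj, hSQ, Set.mem_insert_of_mem _ (Finset.mem_coe.mpr (Finset.mem_univ _))⟩
  intro D
  induction D using Finset.induction_on with
  | empty =>
    intro M Θ hΘ h
    refine ⟨M, Θ, hΘ, fun j => ?_⟩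
    obtain ⟨S, hSj, hSQ, hSq⟩ := h j
    refine ⟨S, hSj, fun p hp => ?_⟩
    rcases hp with rfl | hp
    · simpa using hSq
    · exact hSQ p hp
  | insert β D _ ih =>
    intro M Θ hΘ h
    obtain ⟨m, θ, hθ, hθq⟩ := hpairs (q.1, β)
    rw [Finset.coe_insert] at h
    exact ih _ _ (compOp_mem hCl hθ hΘ) (h.compOp hidem hθ hΘ hθq)

theorem coverable_univ [Fintype B] (hCl : IsCloneOn B Cl) (hidem : IsIdempotent Cl)
    (hpairs : ∀ p : B × B, Coverable Cl {p}) : Coverable Cl Set.univ := by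
  classical
  rw [← Finset.coe_univ]
  induction (Finset.univ : Finset (B × B)) using Finset.induction_on with
  | empty => exact ⟨1, fun v => v 0, hCl.1 1 0, by simpa using covers_empty _⟩
  | insert q Q _ ih =>
    rw [Finset.coe_insert]
    exact coverable_insert hCl hidem hpairs ih q

theorem eq_empty_of_isIdempotent (hidem : IsIdempotent Cl) {b b' : B} (hbb' : b ≠ b') :
    Cl 0 = ∅ := by
  refine Set.eq_empty_of_forall_notMem fun φ hφ => hbb' ?_
  rw [← hidem 0 φ hφ b, ← hidem 0 φ hφ b']
  congr 1
  exact funext Fin.elim0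

theorem card_ne_zero_tuples (m : ℕ) :
    Fintype.card {s : Fin m → Bool // s ≠ fun _ => false} = 2 ^ m - 1 := by
  rw [Fintype.card_subtype_compl, Fintype.card_subtype_eq]
  simp

/-- With `T t` a covering set of the variable `t`, the cube-term matrix has the rows `T i`:
its columns are nonzero because `t ∈ T t`, and row `i` evaluates to `veval φ (T i) x y = x`. -/
theorem hasCubeTerm_of_covers_univ (hCl : IsCloneOn B Cl) (hidem : IsIdempotent Cl)
    {b b' : B} (hbb' : b ≠ b') {m : ℕ} {φ : (Fin m → B) → B} (hφ : φ ∈ Cl m)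
    (hc : Covers φ Set.univ) : HasCubeTerm B Cl := by
  have hm : m ≠ 0 := by
    rintro rfl
    rw [eq_empty_of_isIdempotent hidem hbb'] at hφ
    exact hφ
  choose T hTj hT using hc
  have hcol : ∀ t, (fun i => T i t) ≠ fun _ => false :=
    fun t h => by simpa [hTj t] using congrFun h t
  let E := Fintype.equivFinOfCardEq (card_ne_zero_tuples m)
  refine ⟨m, Nat.one_le_iff_ne_zero.mpr hm,
    fun w => φ (fun t => w (E ⟨fun i => T i t, hcol t⟩)),
    minor_mem hCl hφ _, fun j => (E.symm j).1,
    fun s hs => ⟨E ⟨s, hs⟩, by simp⟩, fun j => (E.symm j).2, fun x y i => ?_⟩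
  simpa only [veval, Equiv.symm_apply_apply] using hT i (x, y) trivial

theorem exists_not_coverable [Fintype B] (hCl : IsCloneOn B Cl) (hidem : IsIdempotent Cl)
    (hB : 1 < Fintype.card B) (hnc : ¬ HasCubeTerm B Cl) :
    ∃ d c : B, d ≠ c ∧ ¬ Coverable Cl {(d, c)} := by
  by_contra! h
  have hpairs : ∀ p : B × B, Coverable Cl {p} := by
    rintro ⟨x, y⟩
    rcases eq_or_ne x y with rfl | hxy
    · exact coverable_diag hCl x
    · exact h x y hxy
  obtain ⟨b, b', hbb'⟩ := Fintype.exists_pair_of_one_lt_card hB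
  obtain ⟨m, φ, hφ, hcov⟩ := coverable_univ hCl hidem hpairs
  exact hnc (hasCubeTerm_of_covers_univ hCl hidem hbb' hφ hcov)

end Covering

section Generation

variable {A B : Type*} {Cl : (n : ℕ) → Set ((Fin n → B) → B)}

def subuniverseClosure (Cl : (n : ℕ) → Set ((Fin n → B) → B)) {X : Type*}
    (G : Set (X → B)) : Set (X → B) :=
  {h | ∃ r, ∃ φ ∈ Cl r, ∃ g : Fin r → X → B,
    (∀ t, g t ∈ G) ∧ h = fun x => φ (fun t => g t x)}

theorem comp_mem_subuniverseClosure (hCl : IsCloneOn B Cl) {X : Type*} {G : Set (X → B)}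
    {m : ℕ} {φ : (Fin m → B) → B} (hφ : φ ∈ Cl m) (h : Fin m → X → B)
    (hh : ∀ j, h j ∈ subuniverseClosure Cl G) :
    (fun x => φ (fun j => h j x)) ∈ subuniverseClosure Cl G := by
  classical
  choose r ψ hψ g hg heq using hh
  let e : (Σ j : Fin m, Fin (r j)) ≃ Fin (∑ j, r j) :=
    Fintype.equivFinOfCardEq (by simp [Fintype.card_sigma])
  refine ⟨∑ j, r j, fun z => φ (fun j => ψ j (fun t => z (e ⟨j, t⟩))),
    hCl.2 m _ φ _ hφ (fun j => minor_mem hCl (hψ j) (fun t => e ⟨j, t⟩)),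
    Sigma.uncurry g ∘ e.symm, fun s => hg _ _, ?_⟩
  funext x
  simp only [heq, Function.comp_apply, Equiv.symm_apply_apply]
  rfl

theorem subset_subuniverseClosure (hCl : IsCloneOn B Cl) {X : Type*} (G : Set (X → B)) :
    G ⊆ subuniverseClosure Cl G :=
  fun g hg => ⟨1, fun v => v 0, hCl.1 1 0, fun _ => g, fun _ => hg, rfl⟩

def clonoidClosure (Cl : (n : ℕ) → Set ((Fin n → B) → B))
    (F : (k : ℕ) → Set ((Fin k → A) → B)) : (m : ℕ) → Set ((Fin m → A) → B) :=
  fun m => {f | ∀ C, IsClonoid A B Cl C → (∀ k, F k ⊆ C k) → f ∈ C m}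

theorem isClonoid_clonoidClosure (F : (k : ℕ) → Set ((Fin k → A) → B)) :
    IsClonoid A B Cl (clonoidClosure Cl F) :=
  ⟨fun k l σ _ hf C hC hFC => hC.1 k l σ _ (hf C hC hFC),
    fun k m φ g hφ hg C hC hFC => hC.2 k m φ g hφ fun j => hg j C hC hFC⟩

theorem subset_clonoidClosure (F : (k : ℕ) → Set ((Fin k → A) → B)) (k : ℕ) :
    F k ⊆ clonoidClosure Cl F k :=
  fun _ hf _ _ hFC => hFC k hf

end Generation

section Separation

variable {A B : Type*} {Cl : (n : ℕ) → Set ((Fin n → B) → B)}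

def fibreVec (a0 a1 : A) {k n : ℕ} (σ : Fin k → Fin n) (j : Fin n) : Fin k → A :=
  fun i => if σ i = j then a1 else a0

open Classical in
/-- The paper's `f_k`: `d` on the unit vectors of `A^k`, `c` elsewhere. -/
noncomputable def unitDetector (a0 a1 : A) (c d : B) (k : ℕ) : (Fin k → A) → B :=
  fun w => if ∃ j, w = fibreVec a0 a1 id j then d else c

def tuplesWithC (c d : B) (n : ℕ) : Set (Fin n → B) :=
  {w | (∀ j, w j = c ∨ w j = d) ∧ ∃ j, w j = c}

/-- A clonoid containing every `f_k` with `k ≠ n`, but not `f_n`. -/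
def separatingClonoid (Cl : (n : ℕ) → Set ((Fin n → B) → B)) (a0 a1 : A) (c d : B)
    (n : ℕ) : (m : ℕ) → Set ((Fin m → A) → B) :=
  fun m => {g | ∀ σ : Fin m → Fin n,
    (fun j => g (fibreVec a0 a1 σ j)) ∈ subuniverseClosure Cl (tuplesWithC c d n)}

theorem isClonoid_separatingClonoid (hCl : IsCloneOn B Cl) (a0 a1 : A) (c d : B) (n : ℕ) :
    IsClonoid A B Cl (separatingClonoid Cl a0 a1 c d n) :=
  ⟨fun _ _ τ _ hf σ => hf (σ ∘ τ),
    fun _ _ _ g hφ hg σ => comp_mem_subuniverseClosure hCl hφ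
      (fun t j => g t (fibreVec a0 a1 σ j)) fun t => hg t σ⟩

/-- If every fibre of `τ` were a singleton, `τ` would be a bijection. -/
theorem exists_fibreVec_ne_unit {a0 a1 : A} (ha : a0 ≠ a1) {k n : ℕ} (hkn : k ≠ n)
    (τ : Fin k → Fin n) : ∃ j, ∀ j₀, fibreVec a0 a1 τ j ≠ fibreVec a0 a1 id j₀ := by
  by_contra! h
  choose ι hι using h
  have hfibre : ∀ i j, τ i = j ↔ i = ι j := fun i j => by
    have := congrFun (hι j) i
    simp only [fibreVec, id] at this
    constructor
    · intro h1
      by_contra h2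
      rw [if_pos h1, if_neg h2] at this
      exact ha this.symm
    · intro h2
      by_contra h1
      rw [if_neg h1, if_pos h2] at this
      exact ha this
  have hbij : Function.Bijective τ := by
    refine ⟨fun i i' h => ?_, fun j => ⟨ι j, (hfibre _ _).mpr rfl⟩⟩
    rw [(hfibre i _).mp rfl, (hfibre i' _).mp rfl, h]
  exact hkn (by simpa using Fintype.card_of_bijective hbij)

theorem unitDetector_mem_separatingClonoid (hCl : IsCloneOn B Cl) {a0 a1 : A} (ha : a0 ≠ a1)
    (c d : B) {k n : ℕ} (hkn : k ≠ n) :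
    unitDetector a0 a1 c d k ∈ separatingClonoid Cl a0 a1 c d n k := by
  intro σ
  apply subset_subuniverseClosure hCl
  obtain ⟨j, hj⟩ := exists_fibreVec_ne_unit ha hkn σ
  refine ⟨fun j' => ?_, j, by simp [unitDetector, hj]⟩
  dsimp only [unitDetector]
  split_ifs <;> simp

theorem coverable_of_const_mem {c d : B} (hdc : d ≠ c) {n : ℕ}
    (hd : (fun _ => d) ∈ subuniverseClosure Cl (tuplesWithC c d n)) :
    Coverable Cl {(d, c)} := by
  classical
  obtain ⟨r, φ, hφ, g, hg, hφg⟩ := hd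
  choose hcd jc hjc using hg
  refine ⟨r, φ, hφ, fun t => ⟨fun t' => decide (g t' (jc t) = c), by simp [hjc t], ?_⟩⟩
  rintro _ rfl
  have hcol : (fun t' => if decide (g t' (jc t) = c) then c else d) = fun t' => g t' (jc t) := by
    funext t'
    rcases hcd t' (jc t) with h | h <;> simp [h, hdc]
  simp only [veval, hcol]
  exact (congrFun hφg (jc t)).symm

theorem unitDetector_notMem_separatingClonoid {a0 a1 : A} {c d : B} (hdc : d ≠ c)
    (hnc : ¬ Coverable Cl {(d, c)}) (n : ℕ) :
    unitDetector a0 a1 c d n ∉ separatingClonoid Cl a0 a1 c d n n := by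
  intro h
  refine hnc (coverable_of_const_mem hdc (n := n) ?_)
  convert h id using 1
  funext j
  exact (if_pos ⟨j, rfl⟩).symm

end Separation

section Counting

variable {A B : Type*} {Cl : (n : ℕ) → Set ((Fin n → B) → B)}

/-- The paper's `F_U = {f_k : k ∈ U}`, graded by arity. -/
def unitDetectors (a0 a1 : A) (c d : B) (U : Set ℕ) : (k : ℕ) → Set ((Fin k → A) → B) :=
  fun k => {f | k ∈ U ∧ f = unitDetector a0 a1 c d k}

theorem unitDetector_mem_clonoidClosure_iff (hCl : IsCloneOn B Cl) {a0 a1 : A}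
    (ha : a0 ≠ a1) {c d : B} (hdc : d ≠ c) (hnc : ¬ Coverable Cl {(d, c)}) (U : Set ℕ)
    (n : ℕ) :
    unitDetector a0 a1 c d n ∈ clonoidClosure Cl (unitDetectors a0 a1 c d U) n ↔ n ∈ U := by
  refine ⟨fun h => ?_, fun hn => subset_clonoidClosure _ n ⟨hn, rfl⟩⟩
  by_contra hn
  refine unitDetector_notMem_separatingClonoid hdc hnc n
    (h _ (isClonoid_separatingClonoid hCl a0 a1 c d n) ?_)
  rintro k _ ⟨hk, rfl⟩
  exact unitDetector_mem_separatingClonoid hCl ha c d (ne_of_mem_of_not_mem hk hn)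

theorem injective_clonoidClosure_unitDetectors (hCl : IsCloneOn B Cl) {a0 a1 : A}
    (ha : a0 ≠ a1) {c d : B} (hdc : d ≠ c) (hnc : ¬ Coverable Cl {(d, c)}) :
    Function.Injective fun U => clonoidClosure Cl (unitDetectors a0 a1 c d U) := by
  intro U V h
  ext n
  rw [← unitDetector_mem_clonoidClosure_iff hCl ha hdc hnc U,
    ← unitDetector_mem_clonoidClosure_iff hCl ha hdc hnc V,
    show clonoidClosure Cl _ = _ from h]

end Counting

end Clonoid

theorem Cardinal.mk_pi_set_le_continuum {ι : Type*} [Countable ι] {X : ι → Type*}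
    [∀ i, Countable (X i)] : Cardinal.mk ((i : ι) → Set (X i)) ≤ Cardinal.continuum := by
  have hinj : Function.Injective
      fun (C : (i : ι) → Set (X i)) => {x : Σ i, X i | x.2 ∈ C x.1} :=
    fun C D h => funext fun i => Set.ext fun x => Set.ext_iff.mp h ⟨i, x⟩
  calc Cardinal.mk ((i : ι) → Set (X i)) ≤ Cardinal.mk (Set (Σ i, X i)) :=
        Cardinal.mk_le_of_injective hinj
    _ = 2 ^ Cardinal.mk (Σ i, X i) := Cardinal.mk_set
    _ ≤ 2 ^ Cardinal.aleph0 := Cardinal.power_le_power_left two_ne_zero Cardinal.mk_le_aleph0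
    _ = Cardinal.continuum := Cardinal.two_power_aleph0

/-- If `A` is finite with `|A| > 1` and `B` is a finite idempotent algebra with
`|B| > 1` and no cube term, then there are continuum many clonoids with source
`A` and target `B`. -/
theorem continuum_many_clonoids_idempotent_no_cube (A B : Type*)
    [Fintype A] [Fintype B] (hA : 1 < Fintype.card A) (hB : 1 < Fintype.card B)
    (Cl : (n : ℕ) → Set ((Fin n → B) → B)) (hCl : IsCloneOn B Cl)
    (hidem : ∀ n (φ : (Fin n → B) → B), φ ∈ Cl n → ∀ b, φ (fun _ => b) = b)
    (hnc : ¬ HasCubeTerm B Cl) :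
    Cardinal.mk {C : (m : ℕ) → Set ((Fin m → A) → B) // IsClonoid A B Cl C} =
      Cardinal.continuum := by
  obtain ⟨a0, a1, ha⟩ := Fintype.exists_pair_of_one_lt_card hA
  obtain ⟨d, c, hdc, hdc_blocks⟩ := Clonoid.exists_not_coverable hCl hidem hB hnc
  refine le_antisymm ((Cardinal.mk_subtype_le _).trans Cardinal.mk_pi_set_le_continuum) ?_
  let clonoidOf (U : Set ℕ) : {C // IsClonoid A B Cl C} :=
    ⟨Clonoid.clonoidClosure Cl (Clonoid.unitDetectors a0 a1 c d U),
      Clonoid.isClonoid_clonoidClosure _⟩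
  have hinj : Function.Injective clonoidOf := fun U V h =>
    Clonoid.injective_clonoidClosure_unitDetectors hCl ha hdc hdc_blocks (congrArg Subtype.val h)
  simpa using Cardinal.lift_mk_le_lift_mk_of_injective hinj
end

section
/- For any U ⊆ ℕ, every function in the clonoid generated by F_U (with target the bare set {0,1}, i.e., the closure of F_U under minors) preserves all relation pairs (P_n, Q_n) with n ∉ U. -/
/-- `Q_n := {0,1}^n \ {(1,…,1)}`, with `{0,1}` rendered as `Bool`. -/
def QrelB (n : ℕ) : Set (Fin n → Bool) :=
  {y | y ≠ fun _ => true}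

/-- `f_k : A^k → {0,1}`, the indicator function of `P_k`, with values in `Bool`. -/
def fkB (A : Type*) [Zero A] [One A] [DecidableEq A] (k : ℕ) : (Fin k → A) → Bool :=
  fun x => decide (∃ i, x i = 1 ∧ ∀ j, j ≠ i → x j = 0)

/-- The family `F_U = {f_k : k ∈ U}` (at arity `n` it contains `f_n` iff `n ∈ U`). -/
def FUfam (A : Type*) [Zero A] [One A] [DecidableEq A] (U : Set ℕ) :
    (n : ℕ) → Set ((Fin n → A) → Bool) :=
  fun n => {g | n ∈ U ∧ g = fkB A n}

/-- The minor-closure of a family `F` (the clonoid generated by `F` with target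
the bare set `{0,1}`). -/
def MinorClosure {A B : Type*} (F : (n : ℕ) → Set ((Fin n → A) → B)) (k : ℕ) :
    Set ((Fin k → A) → B) :=
  {f | ∀ C : (n : ℕ) → Set ((Fin n → A) → B),
      (∀ a b (σ : Fin a → Fin b) g, g ∈ C a → Minor g σ ∈ C b) →
      (∀ n, F n ⊆ C n) → f ∈ C k}

/-!
Preservation of `(P, Q)` passes to minors, so it suffices to check the generators `f_k`, `k ∈ U`.
If `f_k` mapped `k` tuples of `P_n` to `(1,…,1)`, every row and every column of the `k × n` matrix
they form would contain exactly one `1`; the positions of these `1`s then give a bijection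
`[k] ≃ [n]`, so `k = n`.
-/

theorem Fintype.card_eq_of_existsUnique {α β : Type*} [Fintype α] [Fintype β] {R : α → β → Prop}
    (hrow : ∀ a, ∃! b, R a b) (hcol : ∀ b, ∃! a, R a b) :
    Fintype.card α = Fintype.card β := by
  choose f hf hf_unique using hrow
  have hf_iff : ∀ a b, f a = b ↔ R a b := fun a b =>
    ⟨fun h => h ▸ hf a, fun h => (hf_unique a b h).symm⟩
  refine Fintype.card_of_bijective ((Function.bijective_iff_existsUnique f).2 fun b => ?_)
  simpa only [hf_iff] using hcol b

section Prel

variable {A : Type*} [Zero A] [One A]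

theorem existsUnique_eq_one_of_mem_Prel (h01 : (0 : A) ≠ 1) {n : ℕ} {x : Fin n → A}
    (hx : x ∈ Prel A n) : ∃! i, x i = 1 := by
  obtain ⟨i, hi, hzero⟩ := hx
  refine ⟨i, hi, fun j hj => ?_⟩
  by_contra hne
  exact h01 (hzero j hne ▸ hj)

theorem fkB_eq_true_iff [DecidableEq A] {k : ℕ} {x : Fin k → A} :
    fkB A k x = true ↔ x ∈ Prel A k :=
  decide_eq_true_iff

theorem fkB_preserves (h01 : (0 : A) ≠ 1) [DecidableEq A] {k n : ℕ} (hkn : k ≠ n) :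
    Preserves (fkB A k) (Prel A n) (QrelB n) := by
  intro p hrows hall
  have hcols : ∀ i, (fun j => p j i) ∈ Prel A k := fun i =>
    fkB_eq_true_iff.1 (congrFun hall i)
  apply hkn
  simpa using Fintype.card_eq_of_existsUnique
    (fun j => existsUnique_eq_one_of_mem_Prel h01 (hrows j))
    (fun i => existsUnique_eq_one_of_mem_Prel h01 (hcols i))

end Prel

theorem Preserves.minor {A B : Type*} {k l m : ℕ} {f : (Fin k → A) → B}
    {P : Set (Fin m → A)} {Q : Set (Fin m → B)} (hf : Preserves f P Q) (σ : Fin k → Fin l) :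
    Preserves (Minor f σ) P Q :=
  fun p hp => hf (fun j => p (σ j)) (fun j => hp (σ j))

theorem preserves_of_mem_minorClosure {A B : Type*} {F : (n : ℕ) → Set ((Fin n → A) → B)}
    {m : ℕ} {P : Set (Fin m → A)} {Q : Set (Fin m → B)}
    (hF : ∀ n, ∀ g ∈ F n, Preserves g P Q) {k : ℕ} {f : (Fin k → A) → B}
    (hf : f ∈ MinorClosure F k) : Preserves f P Q :=
  hf (fun _ => {g | Preserves g P Q}) (fun _ _ σ _ hg => Preserves.minor hg σ) hF

/-- Every function in the minor-closure of `F_U` preserves `(P_n, Q_n)` for all `n ∉ U`. -/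
theorem minorClosure_FU_preserves (d : ℕ) (hd : 1 ≤ d) (U : Set ℕ)
    (n : ℕ) (hn : n ∉ U) (k : ℕ) (f : (Fin k → Fin (d+1)) → Bool)
    (hf : f ∈ MinorClosure (FUfam (Fin (d+1)) U) k) :
    Preserves f (Prel (Fin (d+1)) n) (QrelB n) := by
  have : NeZero d := ⟨by omega⟩
  refine preserves_of_mem_minorClosure ?_ hf
  rintro m g ⟨hm, rfl⟩
  exact fkB_preserves Fin.zero_ne_one' (ne_of_mem_of_not_mem hm hn)
end

section
/- Let U ⊆ ℕ \ {1}. In the clonoid with target algebra B = ({0,1}, ¬, 0) generated by F_U, the only members of F_ℕ are the elements of F_U; that is, ⟨F_U⟩_B ∩ F_ℕ = F_U. -/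
/-- A clonoid with source `A` and target algebra `B = ({0,1}, ¬, 𝟎)`:
closed under minors, pointwise negation, and the unary constant `𝟎`. -/
def IsClonoidNeg (A : Type*) (C : (n : ℕ) → Set ((Fin n → A) → Bool)) : Prop :=
  (∀ k l (σ : Fin k → Fin l) f, f ∈ C k → Minor f σ ∈ C l) ∧
  (∀ k f, f ∈ C k → (fun x => !(f x)) ∈ C k) ∧
  (∀ k (f : (Fin k → A) → Bool), f ∈ C k → (fun _ => false) ∈ C k)

/-- The clonoid with target `({0,1}, ¬, 𝟎)` generated by the family `F`. -/
def GenNeg {A : Type*} (F : (n : ℕ) → Set ((Fin n → A) → Bool)) (k : ℕ) :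
    Set ((Fin k → A) → Bool) :=
  {f | ∀ C : (n : ℕ) → Set ((Fin n → A) → Bool),
      IsClonoidNeg A C → (∀ n, F n ⊆ C n) → f ∈ C k}

/-!
The functions `t ∘ (f_k)^σ` with `k ∈ U`, `σ : [k] → [m]` and `t : Bool → Bool` (the unary term
operations of `B` are all four maps `Bool → Bool`) form a clonoid containing `F_U`. If
`f_n = t ∘ (f_k)^σ`, the zero tuple forces `t 0 = 0`, and then the unit tuples force every fibre
of `σ : [k] → [n]` to be a singleton; so `σ` is a bijection and `k = n ∈ U`.
-/

section

variable {A : Type*} [Zero A] [One A] [DecidableEq A]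

lemma fkB_zero (h01 : (0 : A) ≠ 1) (k : ℕ) : fkB A k (fun _ => 0) = false := by
  simp only [fkB, decide_eq_false_iff_not]
  rintro ⟨i, h1, -⟩
  exact h01 h1

lemma fkB_single {n : ℕ} (i : Fin n) : fkB A n (Pi.single i 1) = true := by
  simp only [fkB, decide_eq_true_eq]
  exact ⟨i, Pi.single_eq_same i 1, fun j hj => Pi.single_eq_of_ne hj 1⟩

lemma minor_fkB_single_iff (h01 : (0 : A) ≠ 1) {k n : ℕ} (σ : Fin k → Fin n) (i : Fin n) :
    Minor (fkB A k) σ (Pi.single i 1) = true ↔ ∃! j, σ j = i := by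
  have h1 : ∀ x, (Pi.single i 1 : Fin n → A) x = 1 ↔ x = i := fun x => by
    by_cases hx : x = i <;> simp [hx, h01]
  have h0 : ∀ x, (Pi.single i 1 : Fin n → A) x = 0 ↔ x ≠ i := fun x => by
    by_cases hx : x = i <;> simp [hx, h01.symm]
  simp only [Minor, fkB, decide_eq_true_eq, h1, h0]
  exact exists_congr fun _ => and_congr_right fun _ => forall_congr' fun _ => not_imp_not

lemma eq_of_fkB_eq_comp_minor (h01 : (0 : A) ≠ 1) {k n : ℕ} {t : Bool → Bool}
    (σ : Fin k → Fin n) (h : fkB A n = t ∘ Minor (fkB A k) σ) : k = n := by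
  have ht : t false = false := by
    simpa [Minor, fkB_zero h01] using (congrFun h fun _ => 0).symm
  have hbij : Function.Bijective σ := by
    refine Function.bijective_iff_existsUnique σ |>.2 fun i => ?_
    refine (minor_fkB_single_iff h01 σ i).1 ?_
    have hi := congrFun h (Pi.single i 1)
    rw [fkB_single] at hi
    by_contra hf
    simp only [Bool.not_eq_true] at hf
    simp [hf, ht] at hi
  simpa using Fintype.card_of_bijective hbij

variable (A) in
def clonoidFU (U : Set ℕ) (m : ℕ) : Set ((Fin m → A) → Bool) :=
  {g | ∃ k ∈ U, ∃ σ : Fin k → Fin m, ∃ t : Bool → Bool, g = t ∘ Minor (fkB A k) σ}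

lemma isClonoidNeg_clonoidFU (U : Set ℕ) : IsClonoidNeg A (clonoidFU A U) := by
  refine ⟨?_, ?_, ?_⟩
  · rintro k l τ f ⟨m, hm, σ, t, rfl⟩
    exact ⟨m, hm, τ ∘ σ, t, rfl⟩
  · rintro k f ⟨m, hm, σ, t, rfl⟩
    exact ⟨m, hm, σ, not ∘ t, rfl⟩
  · rintro k f ⟨m, hm, σ, -, rfl⟩
    exact ⟨m, hm, σ, fun _ => false, rfl⟩

lemma FUfam_subset_clonoidFU (U : Set ℕ) (n : ℕ) : FUfam A U n ⊆ clonoidFU A U n := by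
  rintro g ⟨hn, rfl⟩
  exact ⟨n, hn, id, id, rfl⟩

end

theorem genNeg_FU_inter_FN_general (d : ℕ) (hd : 1 ≤ d) (U : Set ℕ) (n : ℕ) :
    fkB (Fin (d+1)) n ∈ GenNeg (FUfam (Fin (d+1)) U) n ↔ n ∈ U := by
  have h01 : (0 : Fin (d+1)) ≠ 1 := by
    obtain ⟨e, rfl⟩ : ∃ e, d = e + 1 := ⟨d - 1, by omega⟩
    exact zero_ne_one
  refine ⟨fun h => ?_, fun hn C _ hFU => hFU n ⟨hn, rfl⟩⟩
  obtain ⟨k, hk, σ, t, hf⟩ := h _ (isClonoidNeg_clonoidFU U) (FUfam_subset_clonoidFU U)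
  rwa [← eq_of_fkB_eq_comp_minor h01 σ hf]

/-- For `U ⊆ ℕ \ {1}`, the only members of `F_ℕ` in the clonoid
`⟨F_U⟩_B` with `B = ({0,1}, ¬, 𝟎)` are the elements of `F_U`:
`⟨F_U⟩_B ∩ F_ℕ = F_U`. -/
theorem genNeg_FU_inter_FN (d : ℕ) (hd : 1 ≤ d) (U : Set ℕ)
    (hU : ∀ m ∈ U, 2 ≤ m) (n : ℕ) (hn : 1 ≤ n) :
    fkB (Fin (d+1)) n ∈ GenNeg (FUfam (Fin (d+1)) U) n ↔ n ∈ U :=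
  genNeg_FU_inter_FN_general d hd U n
end

section
/- Let B₁ = ({0,1}, t, s) with t(x,y) = x and s(x,y,z) = x + y + z (mod 2), and B₂ = ({0,1}, t, s) with t(x,y) = y and s the majority operation. Then the product algebra B₁ × B₂ has a 3-cube term but neither an NU-term nor a Mal'cev term. -/
/-- The universe of `B₁ × B₂`, with `B₁ = B₂ = {0,1}` rendered as `Bool`. -/
abbrev DD := Bool × Bool

/-- The binary operation `t`: first projection in `B₁`, second projection in `B₂`. -/
def tOp : (Fin 2 → DD) → DD := fun x => ((x 0).1, (x 1).2)

/-- Boolean majority. -/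
def maj (a b c : Bool) : Bool := (a && b) || (a && c) || (b && c)

/-- The ternary operation `s`: `x + y + z (mod 2)` in `B₁`, majority in `B₂`. -/
def sOp : (Fin 3 → DD) → DD :=
  fun x => (xor (xor (x 0).1 (x 1).1) (x 2).1, maj (x 0).2 (x 1).2 (x 2).2)

/-- The clone of term operations of `B₁ × B₂`, i.e. the clone generated by `t` and `s`. -/
def TermClone : (n : ℕ) → Set ((Fin n → DD) → DD) :=
  fun n => {φ | ∀ Cl : (m : ℕ) → Set ((Fin m → DD) → DD),
      IsCloneOn DD Cl → tOp ∈ Cl 2 → sOp ∈ Cl 3 → φ ∈ Cl n}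

/-! The cube term is `t(s(x₀,x₁,x₂), s(x₀,x₁,x₃))`: its `B₁`-part is the Mal'cev operation
`x₀ + x₁ + x₂` and its `B₂`-part is the majority of `x₀, x₁, x₃`. For the negative claims, every
term operation preserves the two relations preserved by `t` and `s`: on the `B₁`-coordinate the
affine relation `x + y + z + w = 0`, on the `B₂`-coordinate the order `≤`. An affine Boolean NU
operation vanishes on every indicator vector (induction on the support, using the values `0` at
unit vectors), contradicting idempotence at the all-ones vector; a monotone Boolean operation
cannot be Mal'cev, since `(0,0,1) ≤ (0,1,1)` would force `1 ≤ 0`. -/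

open Function

section Clones

variable {B : Type*}

def IsNearUnanimity {n : ℕ} (f : (Fin n → B) → B) : Prop :=
  ∀ a b i, f (update (fun _ => a) i b) = a

def IsMalcev (f : (Fin 3 → B) → B) : Prop :=
  ∀ x y, f ![y, y, x] = x ∧ f ![x, y, y] = x

/-- `Pol R` of clone theory, for an `m`-ary relation `R`. -/
def polymorphisms {m : ℕ} (R : (Fin m → B) → Prop) (n : ℕ) : Set ((Fin n → B) → B) :=
  {φ | ∀ rows : Fin m → Fin n → B, (∀ i, R fun k => rows k i) → R fun k => φ (rows k)}

theorem isCloneOn_polymorphisms {m : ℕ} (R : (Fin m → B) → Prop) :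
    IsCloneOn B (polymorphisms R) :=
  ⟨fun _ i _ h => h i, fun _ _ _ _ hφ hg rows h => hφ _ fun j => hg j rows h⟩

variable {Cl : (n : ℕ) → Set ((Fin n → B) → B)}

theorem IsCloneOn.reindex_mem {m k : ℕ} (hCl : IsCloneOn B Cl) {φ : (Fin m → B) → B}
    (hφ : φ ∈ Cl m) (σ : Fin m → Fin k) : (fun x => φ (x ∘ σ)) ∈ Cl k :=
  hCl.2 m k φ (fun j x => x (σ j)) hφ fun j => hCl.1 k (σ j)

theorem IsCloneOn.comp₂_mem {k : ℕ} (hCl : IsCloneOn B Cl) {φ : (Fin 2 → B) → B}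
    (hφ : φ ∈ Cl 2) {g₀ g₁ : (Fin k → B) → B} (h₀ : g₀ ∈ Cl k) (h₁ : g₁ ∈ Cl k) :
    (fun x => φ ![g₀ x, g₁ x]) ∈ Cl k := by
  convert hCl.2 2 k φ ![g₀, g₁] hφ (Fin.forall_fin_two.2 ⟨h₀, h₁⟩) using 3 with x
  funext j
  fin_cases j <;> rfl

end Clones

section Boolean

def PreservesAffine {n : ℕ} (f : (Fin n → Bool) → Bool) : Prop :=
  ∀ x y z w : Fin n → Bool, (∀ i, (x i ^^ y i ^^ z i ^^ w i) = false) →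
    (f x ^^ f y ^^ f z ^^ f w) = false

theorem PreservesAffine.not_isNearUnanimity {n : ℕ} (hn : 0 < n) {f : (Fin n → Bool) → Bool}
    (hf : PreservesAffine f) : ¬ IsNearUnanimity f := by
  intro hNU
  have hconst (a : Bool) : f (fun _ => a) = a := by
    simpa using hNU a a ⟨0, hn⟩
  have hvanish (S : Finset (Fin n)) : f (fun i => decide (i ∈ S)) = false := by
    induction S using Finset.induction_on with
    | empty => simpa using hconst false
    | @insert j S hj ih =>
      have hunit : f (update (fun _ => false) j true) = false := hNU false true j
      have h := hf (fun i => decide (i ∈ insert j S)) (fun i => decide (i ∈ S))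
        (update (fun _ => false) j true) (fun _ => false) (by
          intro i
          by_cases hij : i = j
          · subst hij; simp [hj]
          · simp [hij])
      rw [ih, hunit, hconst] at h
      simpa using h
  have h := hvanish Finset.univ
  simp only [Finset.mem_univ, decide_true, hconst] at h
  exact Bool.noConfusion h

theorem Monotone.not_isMalcev {f : (Fin 3 → Bool) → Bool} (hf : Monotone f) : ¬ IsMalcev f := by
  intro h
  have hle := hf (show ![false, false, true] ≤ ![false, true, true] by
    intro i; fin_cases i <;> decide)
  rw [(h true false).1, (h false true).2] at hle
  exact absurd hle (by decide)

theorem maj_mono {a b c a' b' c' : Bool} (ha : a ≤ a') (hb : b ≤ b') (hc : c ≤ c') :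
    maj a b c ≤ maj a' b' c' := by
  revert a b c a' b' c'; decide

instance : Std.Commutative (α := Bool) (· ^^ ·) := ⟨Bool.xor_comm⟩

end Boolean

theorem mem_polymorphisms_of_mem_termClone {m n : ℕ} {R : (Fin m → DD) → Prop}
    (ht : tOp ∈ polymorphisms R 2) (hs : sOp ∈ polymorphisms R 3) {φ : (Fin n → DD) → DD}
    (hφ : φ ∈ TermClone n) : φ ∈ polymorphisms R n :=
  hφ _ (isCloneOn_polymorphisms R) ht hs

def fstAffineRel (v : Fin 4 → DD) : Prop :=
  ((v 0).1 ^^ (v 1).1 ^^ (v 2).1 ^^ (v 3).1) = false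

def sndLERel (v : Fin 2 → DD) : Prop :=
  (v 0).2 ≤ (v 1).2

theorem tOp_mem_polymorphisms_fstAffineRel : tOp ∈ polymorphisms fstAffineRel 2 :=
  fun _ h => h 0

theorem sOp_mem_polymorphisms_fstAffineRel : sOp ∈ polymorphisms fstAffineRel 3 := by
  intro r h
  simp only [fstAffineRel, sOp]
  calc _ = ((((r 0 0).1 ^^ (r 1 0).1 ^^ (r 2 0).1 ^^ (r 3 0).1) ^^
        ((r 0 1).1 ^^ (r 1 1).1 ^^ (r 2 1).1 ^^ (r 3 1).1)) ^^
        ((r 0 2).1 ^^ (r 1 2).1 ^^ (r 2 2).1 ^^ (r 3 2).1)) := by ac_rfl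
    _ = false := by rw [h 0, h 1, h 2]; rfl

theorem tOp_mem_polymorphisms_sndLERel : tOp ∈ polymorphisms sndLERel 2 :=
  fun _ h => h 1

theorem sOp_mem_polymorphisms_sndLERel : sOp ∈ polymorphisms sndLERel 3 :=
  fun _ h => maj_mono (h 0) (h 1) (h 2)

def fstSlice {n : ℕ} (φ : (Fin n → DD) → DD) (b : Fin n → Bool) : Bool :=
  (φ fun i => (b i, false)).1

def sndSlice {n : ℕ} (φ : (Fin n → DD) → DD) (b : Fin n → Bool) : Bool :=
  (φ fun i => (false, b i)).2

theorem preservesAffine_fstSlice {n : ℕ} {φ : (Fin n → DD) → DD}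
    (hφ : φ ∈ polymorphisms fstAffineRel n) : PreservesAffine (fstSlice φ) :=
  fun x y z w h => hφ ![fun i => (x i, false), fun i => (y i, false), fun i => (z i, false),
    fun i => (w i, false)] h

theorem monotone_sndSlice {n : ℕ} {φ : (Fin n → DD) → DD}
    (hφ : φ ∈ polymorphisms sndLERel n) : Monotone (sndSlice φ) :=
  fun x y h => hφ ![fun i => (false, x i), fun i => (false, y i)] h

theorem IsNearUnanimity.fstSlice {n : ℕ} {φ : (Fin n → DD) → DD} (h : IsNearUnanimity φ) :
    IsNearUnanimity (fstSlice φ) := by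
  intro a b i
  show (φ ((·, false) ∘ update (fun _ => a) i b)).1 = a
  rw [comp_update]
  exact congrArg Prod.fst (h (a, false) (b, false) i)

theorem IsMalcev.sndSlice {φ : (Fin 3 → DD) → DD} (h : IsMalcev φ) : IsMalcev (sndSlice φ) := by
  intro x y
  have hvec (u v w : Bool) :
      (fun i => (false, ![u, v, w] i)) = ![(false, u), (false, v), (false, w)] := by
    funext i; fin_cases i <;> rfl
  show (φ _).2 = x ∧ (φ _).2 = x
  rw [hvec, hvec]
  exact (h (false, x) (false, y)).imp (congrArg Prod.snd) (congrArg Prod.snd)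

def cube : (Fin 7 → DD) → DD :=
  fun x => tOp ![sOp (x ∘ ![0, 1, 2]), sOp (x ∘ ![0, 1, 3])]

def cubeCol (j : Fin 7) (i : Fin 3) : Bool := (j.1 + 1).testBit i.1

theorem cube_mem_termClone : cube ∈ TermClone 7 := fun _ hCl ht hs =>
  hCl.comp₂_mem ht (hCl.reindex_mem hs _) (hCl.reindex_mem hs _)

theorem cube_apply_cubeCol (x y : DD) (i : Fin 3) :
    cube (fun j => if cubeCol j i then y else x) = x := by
  revert x y i; decide

/-- `B₁ × B₂` has a 3-cube term (a 7-ary term acting as required on the rows of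
the 3×7 matrix whose columns are all tuples in `{x,y}³` except `(x,x,x)`;
columns are encoded by Boolean triples, `true` meaning `y`), but has neither a
near-unanimity term nor a Mal'cev term. -/
theorem prod_cube_no_NU_no_malcev :
    (∃ c ∈ TermClone 7, ∃ col : Fin 7 → (Fin 3 → Bool),
      (∀ s : Fin 3 → Bool, s ≠ (fun _ => false) → ∃ j, col j = s) ∧
      (∀ j, col j ≠ (fun _ => false)) ∧
      (∀ x y : DD, ∀ i : Fin 3, c (fun j => if col j i then y else x) = x)) ∧
    ¬ (∃ n, 3 ≤ n ∧ ∃ φ ∈ TermClone n, ∀ x y : DD, ∀ i : Fin n,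
        φ (Function.update (fun _ => x) i y) = x) ∧
    ¬ (∃ p ∈ TermClone 3, ∀ x y : DD, p ![y, y, x] = x ∧ p ![x, y, y] = x) := by
  refine ⟨⟨cube, cube_mem_termClone, cubeCol, by decide, by decide, cube_apply_cubeCol⟩, ?_, ?_⟩
  · rintro ⟨n, hn, φ, hφ, hNU⟩
    have hpol := mem_polymorphisms_of_mem_termClone tOp_mem_polymorphisms_fstAffineRel
      sOp_mem_polymorphisms_fstAffineRel hφ
    exact (preservesAffine_fstSlice hpol).not_isNearUnanimity (by omega)
      (IsNearUnanimity.fstSlice hNU)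
  · rintro ⟨p, hp, hMal⟩
    have hpol := mem_polymorphisms_of_mem_termClone tOp_mem_polymorphisms_sndLERel
      sOp_mem_polymorphisms_sndLERel hp
    exact (monotone_sndSlice hpol).not_isMalcev (IsMalcev.sndSlice hMal)
end
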